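/- Let all preferences in P be substitutable and satisfy the law of aggregate demand, let μ and μ̃ be stable matchings with μ ≻_F μ̃, and let μ' be a cyclic matching under the reduced preference profile P^{μ,μ̃} (i.e. μ' = μ_σ for some cycle σ for P^{μ,μ̃}). Then μ' is a stable matching under P^{μ,μ̃}, i.e. μ' ∈ S(P^{μ,μ̃}). -/

import Mathlib

open Finset

noncomputable section

open scoped Classical

/-- `C` is a choice function: `C S ⊆ S` for every `S`. -/
def IsChoiceFun {α : Type*} (C : Finset α → Finset α) : Prop := ∀ S, C S ⊆ S

/-- Substitutability of a choice function: if `b` is chosen from `S`, then `b` is chosen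
from `S' ∪ {b}` for every `S' ⊆ S`. -/
def Substitutable {α : Type*} [DecidableEq α] (C : Finset α → Finset α) : Prop :=
  ∀ (S S' : Finset α) (b : α), S' ⊆ S → b ∈ C S → b ∈ C (insert b S')

/-- The law of aggregate demand for a choice function. -/
def LAD {α : Type*} (C : Finset α → Finset α) : Prop :=
  ∀ S' S : Finset α, S' ⊆ S → (C S').card ≤ (C S).card

/-- The most `u`-preferred subset of `S` among the members of the family `A` of acceptable
sets (the empty set is always available as a fallback). -/
def bestIn {α : Type*} (u : Finset α → ℕ) (A : Set (Finset α)) (S : Finset α) : Finset α := by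
  classical
  have h : ∃ T ∈ (S.powerset).filter (fun T => T ∈ A ∨ T = ∅),
      ∀ T' ∈ (S.powerset).filter (fun T => T ∈ A ∨ T = ∅), u T' ≤ u T :=
    Finset.exists_max_image _ u ⟨∅, by simp⟩
  exact h.choose

/-- A many-to-many matching market: each firm `f` has a strict preference over subsets
of workers, represented by an injective utility `uF f`, and symmetrically for workers. -/
structure Market (F W : Type*) where
  uF : F → Finset W → ℕ
  uW : W → Finset F → ℕ
  injF : ∀ f, Function.Injective (uF f)
  injW : ∀ w, Function.Injective (uW w)

/-- A many-to-many matching. -/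
structure Matching (F W : Type*) where
  fm : F → Finset W
  wm : W → Finset F
  consistent : ∀ f w, w ∈ fm f ↔ f ∈ wm w

namespace Market

variable {F W : Type*} [DecidableEq F] [DecidableEq W]

/-- The choice set of firm `f` under the original preference: the most preferred
subset among the acceptable subsets (those strictly preferred to `∅`). -/
def Cf (M : Market F W) (f : F) : Finset W → Finset W :=
  bestIn (M.uF f) {T | M.uF f ∅ < M.uF f T}

/-- The choice set of worker `w` under the original preference. -/
def Cw (M : Market F W) (w : W) : Finset F → Finset F :=
  bestIn (M.uW w) {T | M.uW w ∅ < M.uW w T}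

/-- Individual rationality under the original profile. -/
def IR (M : Market F W) (μ : Matching F W) : Prop :=
  (∀ f, M.Cf f (μ.fm f) = μ.fm f) ∧ (∀ w, M.Cw w (μ.wm w) = μ.wm w)

/-- `(f,w)` blocks `μ` under the original profile. -/
def Blocks (M : Market F W) (μ : Matching F W) (f : F) (w : W) : Prop :=
  w ∉ μ.fm f ∧ w ∈ M.Cf f (insert w (μ.fm f)) ∧ f ∈ M.Cw w (insert f (μ.wm w))

/-- Stability under the original profile. -/
def Stable (M : Market F W) (μ : Matching F W) : Prop :=
  M.IR μ ∧ ∀ f w, ¬ M.Blocks μ f w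

/-- Blair's partial order for firm `f`: `S ⪰_f S'` iff `C_f (S ∪ S') = S`. -/
def blairF (M : Market F W) (f : F) (S S' : Finset W) : Prop := M.Cf f (S ∪ S') = S

/-- Blair's partial order for worker `w`. -/
def blairW (M : Market F W) (w : W) (S S' : Finset F) : Prop := M.Cw w (S ∪ S') = S

/-- The unanimous Blair order for the firms' side: `μ ⪰_F μ'`. -/
def geF (M : Market F W) (μ μ' : Matching F W) : Prop := ∀ f, M.blairF f (μ.fm f) (μ'.fm f)

/-- The unanimous Blair order for the workers' side: `μ ⪰_W μ'`. -/
def geW (M : Market F W) (μ μ' : Matching F W) : Prop := ∀ w, M.blairW w (μ.wm w) (μ'.wm w)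

/-- Strict unanimous Blair order for the firms' side: `μ ≻_F μ'`. -/
def gtF (M : Market F W) (μ μ' : Matching F W) : Prop := M.geF μ μ' ∧ μ ≠ μ'

/-- Workers deleted from `f`'s list in Step 1(a) of the reduction procedure:
those belonging to some `W' ≻_f μ(f)` but not to `μ(f)`. -/
def D1 (M : Market F W) (μ : Matching F W) (f : F) : Set W :=
  {x | ∃ W' : Finset W, (M.Cf f (W' ∪ μ.fm f) = W' ∧ W' ≠ μ.fm f) ∧ x ∈ W' ∧ x ∉ μ.fm f}

/-- Workers deleted from `f`'s list in Step 2(a): those belonging to some `W'` with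
`μ̃(f) ≻_f W'` but not to `μ̃(f)`. -/
def D2 (M : Market F W) (μt : Matching F W) (f : F) : Set W :=
  {x | ∃ W' : Finset W, (M.Cf f (μt.fm f ∪ W') = μt.fm f ∧ μt.fm f ≠ W') ∧ x ∈ W' ∧ x ∉ μt.fm f}

/-- Firms deleted from `w`'s list in Step 1(b). -/
def E1 (M : Market F W) (μt : Matching F W) (w : W) : Set F :=
  {x | ∃ F' : Finset F, (M.Cw w (F' ∪ μt.wm w) = F' ∧ F' ≠ μt.wm w) ∧ x ∈ F' ∧ x ∉ μt.wm w}

/-- Firms deleted from `w`'s list in Step 2(b). -/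
def E2 (M : Market F W) (μ : Matching F W) (w : W) : Set F :=
  {x | ∃ F' : Finset F, (M.Cw w (μ.wm w ∪ F') = μ.wm w ∧ μ.wm w ≠ F') ∧ x ∈ F' ∧ x ∉ μ.wm w}

/-- Workers deleted from `f`'s list in Step 3: those workers `w` for which `{f}` is no
longer on `w`'s list after Steps 1 and 2 (either `{f}` was never acceptable to `w`, or
`f` was deleted from `w`'s list in Step 1(b) or 2(b)). -/
def D3 (M : Market F W) (μ μt : Matching F W) (f : F) : Set W :=
  {w | ¬ (M.uW w ∅ < M.uW w {f}) ∨ f ∈ M.E1 μt w ∪ M.E2 μ w}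

/-- Firms deleted from `w`'s list in Step 3. -/
def E3 (M : Market F W) (μ μt : Matching F W) (w : W) : Set F :=
  {f | ¬ (M.uF f ∅ < M.uF f {w}) ∨ w ∈ M.D1 μ f ∪ M.D2 μt f}

/-- All workers deleted from `f`'s list in the reduction procedure. -/
def Dall (M : Market F W) (μ μt : Matching F W) (f : F) : Set W :=
  M.D1 μ f ∪ M.D2 μt f ∪ M.D3 μ μt f

/-- All firms deleted from `w`'s list in the reduction procedure. -/
def Eall (M : Market F W) (μ μt : Matching F W) (w : W) : Set F :=
  M.E1 μt w ∪ M.E2 μ w ∪ M.E3 μ μt w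

/-- The family of sets surviving in `f`'s list under the reduced profile `P^{μ,μ̃}`:
originally acceptable sets containing no deleted worker. -/
def RAf (M : Market F W) (μ μt : Matching F W) (f : F) : Set (Finset W) :=
  {T | M.uF f ∅ < M.uF f T ∧ ∀ x ∈ T, x ∉ M.Dall μ μt f}

/-- The family of sets surviving in `w`'s list under the reduced profile `P^{μ,μ̃}`. -/
def RAw (M : Market F W) (μ μt : Matching F W) (w : W) : Set (Finset F) :=
  {T | M.uW w ∅ < M.uW w T ∧ ∀ x ∈ T, x ∉ M.Eall μ μt w}

/-- The choice set `C^{μ,μ̃}_f` of firm `f` under the reduced profile. -/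
def Cfred (M : Market F W) (μ μt : Matching F W) (f : F) : Finset W → Finset W :=
  bestIn (M.uF f) (M.RAf μ μt f)

/-- The choice set `C^{μ,μ̃}_w` of worker `w` under the reduced profile. -/
def Cwred (M : Market F W) (μ μt : Matching F W) (w : W) : Finset F → Finset F :=
  bestIn (M.uW w) (M.RAw μ μt w)

/-- Individual rationality under the reduced profile `P^{μ,μ̃}`. -/
def IRred (M : Market F W) (μ μt ν : Matching F W) : Prop :=
  (∀ f, M.Cfred μ μt f (ν.fm f) = ν.fm f) ∧ (∀ w, M.Cwred μ μt w (ν.wm w) = ν.wm w)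

/-- Blocking under the reduced profile `P^{μ,μ̃}`. -/
def Blocksred (M : Market F W) (μ μt ν : Matching F W) (f : F) (w : W) : Prop :=
  w ∉ ν.fm f ∧ w ∈ M.Cfred μ μt f (insert w (ν.fm f)) ∧
    f ∈ M.Cwred μ μt w (insert f (ν.wm w))

/-- Stability under the reduced profile `P^{μ,μ̃}`. -/
def Stablered (M : Market F W) (μ μt ν : Matching F W) : Prop :=
  M.IRred μ μt ν ∧ ∀ f w, ¬ M.Blocksred μ μt ν f w

/-- The unanimous Blair order on the firms' side computed with the reduced choice sets. -/
def geFred (M : Market F W) (μ μt ν ν' : Matching F W) : Prop :=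
  ∀ f, M.Cfred μ μt f (ν.fm f ∪ ν'.fm f) = ν.fm f

/-- The unanimous Blair order on the workers' side computed with the reduced choice sets. -/
def geWred (M : Market F W) (μ μt ν ν' : Matching F W) : Prop :=
  ∀ w, M.Cwred μ μt w (ν.wm w ∪ ν'.wm w) = ν.wm w

/-- All preferences in the market are substitutable. -/
def SubstAll (M : Market F W) : Prop :=
  (∀ f, Substitutable (M.Cf f)) ∧ (∀ w, Substitutable (M.Cw w))

/-- All preferences in the market satisfy the law of aggregate demand. -/
def LADAll (M : Market F W) : Prop :=
  (∀ f, LAD (M.Cf f)) ∧ (∀ w, LAD (M.Cw w))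

/-- A cycle for the reduced profile `P^{μ,μ̃}`: an `r`-periodic sequence of worker-firm
pairs `(w_i, f_i)` (indexed cyclically) such that (i) `w_i ∈ μ(f_i) \ μ̃(f_i)`;
(ii) `C^{μ,μ̃}_{f_i}(W \ {w_i}) = (μ(f_i) \ {w_i}) ∪ {w_{i+1}}`; and (iii)
`C^{μ,μ̃}_{w_{i+1}}(μ(w_{i+1}) ∪ {f_i}) = (μ(w_{i+1}) \ {f_{i+1}}) ∪ {f_i}`. -/
def IsCycle [Fintype W] (M : Market F W) (μ μt : Matching F W) (r : ℕ)
    (w : ℕ → W) (f : ℕ → F) : Prop :=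
  0 < r ∧ (∀ i, w (i + r) = w i) ∧ (∀ i, f (i + r) = f i) ∧
  ∀ i, (w i ∈ μ.fm (f i) ∧ w i ∉ μt.fm (f i)) ∧
    M.Cfred μ μt (f i) (Finset.univ \ {w i}) = insert (w (i + 1)) (μ.fm (f i) \ {w i}) ∧
    M.Cwred μ μt (w (i + 1)) (μ.wm (w (i + 1)) ∪ {f i}) =
      insert (f i) (μ.wm (w (i + 1)) \ {f (i + 1)})

/-- The firm-side assignment of the cyclic matching `μ_σ` obtained from the cycle
`σ = (w, f)` of length `r`. -/
def cyclicFm (μ : Matching F W) (r : ℕ) (w : ℕ → W) (f : ℕ → F) (g : F) : Finset W :=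
  if ∃ i ∈ Finset.range r, f i = g then
    (μ.fm g \ ((Finset.range r).filter (fun i => f i = g)).image w) ∪
      ((Finset.range r).filter (fun i => f i = g)).image (fun i => w (i + 1))
  else μ.fm g

/-- `ν` is a cyclic matching under the reduced profile `P^{μ,μ̃}`: `ν = μ_σ` for some
cycle `σ` for `P^{μ,μ̃}` (the worker side of `ν` is determined by consistency). -/
def IsCyclicMatching [Fintype W] (M : Market F W) (μ μt ν : Matching F W) : Prop :=
  ∃ (r : ℕ) (w : ℕ → W) (f : ℕ → F),
    M.IsCycle μ μt r w f ∧ ∀ g, ν.fm g = cyclicFm μ r w f g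

end Market

/-!
Partners under `μ` or `μ̃` are never deleted by the reduction: a deleted partner would block `μ`
or `μ̃`, by substitutability, path independence, `μ ⪰_F μ̃` and its consequence `μ̃ ⪰_W μ`.
Hence under `P^{μ,μ̃}` a firm chooses `μ(f)` from every menu containing it, a worker keeps `μ(w)`,
and the reduced choice functions stay substitutable and satisfy LAD.

By LAD and the rural hospitals theorem `w_{i+1} ∉ μ(f_i)`, so conditions (ii) and (iii) make
`(w_{i+1}, f_{i+1})` a function of `(w_i, f_i)`: the cycle permutes its pairs, and every agent gains
exactly as many partners as it loses. Substitutability puts `μ_σ(f)` inside the choice of `f` from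
`W` minus the workers leaving `f`, and the choice of `w` from `μ(w)` plus the firms `w` joins
inside `μ_σ(w)`; LAD and the count make both inclusions equalities. A matching in which every
agent holds its choice from a menu, and every pair lies in one of its two members' menus, is stable.
-/

section ChoiceFunction

variable {α : Type*}

theorem Substitutable.mem_of_subset [DecidableEq α] {C : Finset α → Finset α}
    (hC : Substitutable C) {S T : Finset α} {b : α} (hb : b ∈ C S) (hTS : T ⊆ S) (hbT : b ∈ T) :
    b ∈ C T := by
  rw [← insert_erase hbT]
  exact hC S _ b ((erase_subset b T).trans hTS) hb

theorem Substitutable.comp_filter [DecidableEq α] {C : Finset α → Finset α} (hC : IsChoiceFun C)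
    (hs : Substitutable C) (p : α → Prop) [DecidablePred p] :
    Substitutable fun S => C (S.filter p) := by
  intro S S' b hS' hb
  have hpb : p b := (mem_filter.1 (hC _ hb)).2
  simp only [filter_insert, if_pos hpb]
  exact hs _ _ b (filter_subset_filter p hS') hb

theorem LAD.comp_filter {C : Finset α → Finset α} (hC : LAD C) (p : α → Prop) [DecidablePred p] :
    LAD fun S => C (S.filter p) :=
  fun _ _ h => hC _ _ (filter_subset_filter p h)

theorem LAD.card_le_of_union_eq [DecidableEq α] {C : Finset α → Finset α} (hC : LAD C)
    {S S' : Finset α} (hS' : C S' = S') (h : C (S ∪ S') = S) : S'.card ≤ S.card := by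
  simpa only [hS', h] using hC S' (S ∪ S') subset_union_right

end ChoiceFunction

section BestIn

variable {α : Type*} (u : Finset α → ℕ) (A : Set (Finset α))

theorem bestIn_spec (S : Finset α) :
    (bestIn u A S ⊆ S ∧ (bestIn u A S ∈ A ∨ bestIn u A S = ∅)) ∧
      ∀ T ⊆ S, (T ∈ A ∨ T = ∅) → u T ≤ u (bestIn u A S) := by
  have h : ∃ T ∈ (S.powerset).filter (fun T => T ∈ A ∨ T = ∅),
      ∀ T' ∈ (S.powerset).filter (fun T => T ∈ A ∨ T = ∅), u T' ≤ u T :=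
    exists_max_image _ u ⟨∅, by simp⟩
  obtain ⟨hmem, hmax⟩ := h.choose_spec
  rw [mem_filter, mem_powerset] at hmem
  exact ⟨hmem, fun T hT hA => hmax T (mem_filter.2 ⟨mem_powerset.2 hT, hA⟩)⟩

theorem bestIn_subset (S : Finset α) : bestIn u A S ⊆ S := (bestIn_spec u A S).1.1

theorem bestIn_mem_or_eq_empty (S : Finset α) : bestIn u A S ∈ A ∨ bestIn u A S = ∅ :=
  (bestIn_spec u A S).1.2

theorem le_bestIn {S T : Finset α} (hT : T ⊆ S) (hA : T ∈ A ∨ T = ∅) :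
    u T ≤ u (bestIn u A S) :=
  (bestIn_spec u A S).2 T hT hA

variable {u}

theorem bestIn_eq_of_forall_le (hu : Function.Injective u) {S T : Finset α} (hT : T ⊆ S)
    (hA : T ∈ A ∨ T = ∅) (hmax : ∀ T' ⊆ S, (T' ∈ A ∨ T' = ∅) → u T' ≤ u T) :
    bestIn u A S = T :=
  hu <| (hmax _ (bestIn_subset u A S) (bestIn_mem_or_eq_empty u A S)).antisymm (le_bestIn u A hT hA)

theorem bestIn_eq_of_subset_of_subset (hu : Function.Injective u) {S T X : Finset α}
    (hS : bestIn u A S = X) (hXT : X ⊆ T) (hTS : T ⊆ S) : bestIn u A T = X := by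
  subst hS
  exact bestIn_eq_of_forall_le A hu hXT (bestIn_mem_or_eq_empty u A S)
    fun T' hT' hA' => le_bestIn u A (hT'.trans hTS) hA'

theorem bestIn_union_bestIn [DecidableEq α] (hu : Function.Injective u)
    (hs : Substitutable (bestIn u A)) (S T : Finset α) :
    bestIn u A (S ∪ bestIn u A T) = bestIn u A (S ∪ T) := by
  refine bestIn_eq_of_subset_of_subset A hu rfl (fun x hx => ?_)
    (union_subset_union subset_rfl (bestIn_subset u A T))
  rcases mem_union.1 (bestIn_subset u A _ hx) with hxS | hxT
  · exact mem_union_left _ hxS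
  · exact mem_union_right _ (hs.mem_of_subset hx subset_union_right hxT)

theorem bestIn_restrict (hu : Function.Injective u) (p : α → Prop) [DecidablePred p]
    (S : Finset α) : bestIn u {T | T ∈ A ∧ ∀ x ∈ T, p x} S = bestIn u A (S.filter p) := by
  refine bestIn_eq_of_forall_le _ hu ((bestIn_subset u A _).trans (filter_subset p S)) ?_ ?_
  · refine (bestIn_mem_or_eq_empty u A _).imp_left fun h => ⟨h, fun x hx => ?_⟩
    exact (mem_filter.1 (bestIn_subset u A _ hx)).2
  · rintro T hT (⟨hA, hp⟩ | rfl)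
    · exact le_bestIn u A (fun x hx => mem_filter.2 ⟨hT hx, hp x hx⟩) (Or.inl hA)
    · exact le_bestIn u A (empty_subset _) (Or.inr rfl)

theorem Substitutable.singleton_mem_of_mem_bestIn [DecidableEq α]
    (hs : Substitutable (bestIn u A)) {S : Finset α} {b : α} (hb : b ∈ bestIn u A S) :
    {b} ∈ A := by
  have hb' : b ∈ bestIn u A {b} := hs S ∅ b (empty_subset _) hb
  have hsingle : bestIn u A {b} = {b} :=
    (bestIn_subset u A _).antisymm (singleton_subset_iff.2 hb')
  rcases bestIn_mem_or_eq_empty u A {b} with h | h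
  · rwa [hsingle] at h
  · exact absurd (h ▸ hb') (notMem_empty b)

end BestIn

theorem Function.Periodic.exists_lt_succ_iff {P : ℕ → Prop} {r : ℕ} (hP : Function.Periodic P r)
    (hr : 0 < r) : (∃ i < r, P (i + 1)) ↔ ∃ i < r, P i := by
  have hP0 : P r = P 0 := by simpa using hP 0
  constructor
  · rintro ⟨i, hi, h⟩
    rcases (Nat.succ_le_of_lt hi).lt_or_eq with hlt | heq
    · exact ⟨i + 1, hlt, h⟩
    · exact ⟨0, hr, hP0 ▸ heq ▸ h⟩
  · rintro ⟨_ | i, hi, h⟩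
    · exact ⟨r - 1, by omega, by rwa [Nat.sub_add_cancel hr, hP0]⟩
    · exact ⟨i, by omega, h⟩

/-- A periodic sequence whose successor term depends only on the current term runs through a
permutation of its finitely many values, so the current term is recovered from the next. -/
theorem Function.Periodic.eq_of_succ_eq {P : Type*} {n : ℕ → P} {r : ℕ}
    (hn : Function.Periodic n r) (hr : 0 < r) (hdet : ∀ i j, n i = n j → n (i + 1) = n (j + 1))
    {i j : ℕ} (h : n (i + 1) = n (j + 1)) : n i = n j := by
  have hfin : (Set.range n).Finite := by
    refine ((range r).image n).finite_toSet.subset ?_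
    rintro _ ⟨k, rfl⟩
    exact mem_coe.2 (mem_image.2 ⟨k % r, mem_range.2 (Nat.mod_lt k hr), hn.map_mod_nat k⟩)
  have := hfin.to_subtype
  let succ : Set.range n → Set.range n := fun x => ⟨n (x.2.choose + 1), _, rfl⟩
  have hsucc : ∀ k, succ ⟨n k, k, rfl⟩ = ⟨n (k + 1), _, rfl⟩ := fun k =>
    Subtype.ext (hdet _ _ (Exists.choose_spec (p := fun m => n m = n k) ⟨k, rfl⟩))
  have hsurj : Function.Surjective succ := by
    rintro ⟨_, k, rfl⟩
    refine ⟨⟨n (k + r - 1), _, rfl⟩, (hsucc _).trans (Subtype.ext ?_)⟩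
    change n (k + r - 1 + 1) = n k
    rw [Nat.sub_add_cancel (by omega), hn k]
  have := Finite.injective_iff_surjective.2 hsurj (a₁ := ⟨n i, i, rfl⟩) (a₂ := ⟨n j, j, rfl⟩)
    ((hsucc i).trans ((Subtype.ext h).trans (hsucc j).symm))
  exact congrArg Subtype.val this

theorem Finset.card_image_eq_card_image_of_eq_iff {ι α β : Type*} [DecidableEq α] [DecidableEq β]
    {s : Finset ι} {a : ι → α} {b : ι → β} (h : ∀ i ∈ s, ∀ j ∈ s, a i = a j ↔ b i = b j) :
    (s.image a).card = (s.image b).card := by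
  set p : ι → α × β := fun i => (a i, b i)
  have hfst : s.image a = (s.image p).image Prod.fst := by rw [image_image]; rfl
  have hsnd : s.image b = (s.image p).image Prod.snd := by rw [image_image]; rfl
  have hinj : ∀ x ∈ s.image p, ∀ y ∈ s.image p, (x.1 = y.1 ↔ x.2 = y.2) := by
    simp only [mem_image]
    rintro _ ⟨i, hi, rfl⟩ _ ⟨j, hj, rfl⟩
    exact h i hi j hj
  rw [hfst, hsnd, card_image_of_injOn fun x hx y hy hxy => Prod.ext hxy ((hinj x hx y hy).1 hxy),
    card_image_of_injOn fun x hx y hy hxy => Prod.ext ((hinj x hx y hy).2 hxy) hxy]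

theorem Finset.card_sdiff_union {α : Type*} [DecidableEq α] {A D B : Finset α} (hD : D ⊆ A)
    (hB : Disjoint A B) (h : D.card = B.card) : ((A \ D) ∪ B).card = A.card := by
  have := card_le_card hD
  rw [card_union_of_disjoint (hB.mono_left sdiff_subset), card_sdiff_of_subset hD]
  omega

namespace Matching

variable {F W : Type*}

def swap (μ : Matching F W) : Matching W F := ⟨μ.wm, μ.fm, fun w f => (μ.consistent f w).symm⟩

theorem sum_card_fm_eq_sum_card_wm [Fintype W] (ν : Matching F W)
    {s : Finset F} (hs : ∀ v, ν.wm v ⊆ s) :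
    ∑ g ∈ s, (ν.fm g).card = ∑ v, (ν.wm v).card := by
  convert sum_card_bipartiteAbove_eq_sum_card_bipartiteBelow (fun g v => v ∈ ν.fm g)
    (s := s) (t := univ) using 3 with g - v -
  · ext v; simp [bipartiteAbove]
  · ext g; simp only [bipartiteBelow, mem_filter, ν.consistent]
    exact ⟨fun h => ⟨hs v h, h⟩, And.right⟩

end Matching

namespace Market

variable {F W : Type*} [DecidableEq F] [DecidableEq W] {M : Market F W} {μ μt : Matching F W}

/-- Exchanging the two sides turns the worker side of `P^{μ,μ̃}` into the firm side of
`P^{μ̃,μ}` (`Eall_eq_swap`), so worker-side facts follow from firm-side ones. -/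
def swap (M : Market F W) : Market W F := ⟨M.uW, M.uF, M.injW, M.injF⟩

theorem SubstAll.swap (h : M.SubstAll) : M.swap.SubstAll := ⟨h.2, h.1⟩

theorem Stable.swap (h : M.Stable μ) : M.swap.Stable μ.swap :=
  ⟨⟨h.1.2, h.1.1⟩, fun w f ⟨hfw, hw, hf⟩ =>
    h.2 f w ⟨fun hwf => hfw ((μ.consistent f w).1 hwf), hf, hw⟩⟩

theorem Eall_eq_swap (w : W) : M.Eall μ μt w = M.swap.Dall μt.swap μ.swap w := rfl

theorem geW_of_geF (hsub : M.SubstAll) (hμt : M.Stable μt) (hF : M.geF μ μt) :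
    M.geW μt μ := by
  intro v
  have hchoice : M.Cw v (μt.wm v ∪ μ.wm v) ⊆ μt.wm v := by
    intro g hg
    by_contra hgμt
    have hgμ : g ∈ μ.wm v := (mem_union.1 (bestIn_subset _ _ _ hg)).resolve_left hgμt
    refine hμt.2 g v ⟨fun h => hgμt ((μt.consistent g v).1 h), ?_, ?_⟩
    · exact hsub.1 g _ _ v subset_union_right (by rw [hF g]; exact (μ.consistent g v).2 hgμ)
    · exact hsub.2 v _ _ g subset_union_left hg
  exact (bestIn_eq_of_subset_of_subset _ (M.injW v) rfl hchoice subset_union_left).symm.trans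
    (hμt.1.2 v)

theorem notMem_D1 (hsub : M.SubstAll) (hμ : M.Stable μ) (hW : M.geW μt μ) {f : F} {x : W}
    (hx : x ∈ μ.fm f ∪ μt.fm f) : x ∉ M.D1 μ f := by
  rintro ⟨W', ⟨hW', -⟩, hxW', hxμ⟩
  have hfx : f ∈ μt.wm x := (μt.consistent f x).1 ((mem_union.1 hx).resolve_left hxμ)
  refine hμ.2 f x ⟨hxμ, ?_, ?_⟩
  · exact hsub.1 f _ _ x subset_union_right (by rwa [hW'])
  · exact hsub.2 x _ _ f subset_union_right (by rwa [hW x])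

theorem notMem_D2 (hsub : M.SubstAll) (hF : M.geF μ μt) {f : F} {x : W}
    (hx : x ∈ μ.fm f ∪ μt.fm f) : x ∉ M.D2 μt f := by
  rintro ⟨W', ⟨hW', -⟩, hxW', hxμt⟩
  have hxμ : x ∈ μ.fm f := (mem_union.1 hx).resolve_right hxμt
  have hchoice : M.Cf f (μ.fm f ∪ (μt.fm f ∪ W')) = μ.fm f :=
    calc M.Cf f (μ.fm f ∪ (μt.fm f ∪ W'))
        = M.Cf f (μ.fm f ∪ M.Cf f (μt.fm f ∪ W')) :=
          (bestIn_union_bestIn _ (M.injF f) (hsub.1 f) _ _).symm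
      _ = μ.fm f := by rw [hW']; exact hF f
  have hx' : x ∈ M.Cf f (μt.fm f ∪ W') :=
    (hsub.1 f).mem_of_subset (hchoice ▸ hxμ) subset_union_right (mem_union_right _ hxW')
  exact hxμt (hW' ▸ hx')

theorem notMem_D3 (hsub : M.SubstAll) (hμ : M.Stable μ) (hμt : M.Stable μt)
    (hF : M.geF μ μt) (hW : M.geW μt μ) {f : F} {x : W} (hx : x ∈ μ.fm f ∪ μt.fm f) :
    x ∉ M.D3 μ μt f := by
  have hfx : f ∈ μ.wm x ∪ μt.wm x := by
    simpa only [mem_union, μ.consistent, μt.consistent] using hx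
  rw [D3, Set.mem_ofPred_eq, Set.mem_union]
  rintro (hacc | hE1 | hE2)
  · have hsingle : ∀ ν : Matching F W, M.Stable ν → f ∈ ν.wm x → M.uW x ∅ < M.uW x {f} :=
      fun ν hν hfν => Substitutable.singleton_mem_of_mem_bestIn {T | M.uW x ∅ < M.uW x T}
        (hsub.2 x) (show f ∈ M.Cw x (ν.wm x) by rwa [hν.1.2 x])
    rcases mem_union.1 hfx with h | h
    exacts [hacc (hsingle μ hμ h), hacc (hsingle μt hμt h)]
  · exact notMem_D1 (M := M.swap) (μ := μt.swap) (μt := μ.swap) hsub.swap hμt.swap hF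
      (by rwa [union_comm]) hE1
  · exact notMem_D2 (M := M.swap) (μ := μt.swap) (μt := μ.swap) hsub.swap hW
      (by rwa [union_comm]) hE2

theorem notMem_Dall (hsub : M.SubstAll) (hμ : M.Stable μ) (hμt : M.Stable μt)
    (hF : M.geF μ μt) (hW : M.geW μt μ) {f : F} {x : W} (hx : x ∈ μ.fm f ∪ μt.fm f) :
    x ∉ M.Dall μ μt f := by
  rintro ((h | h) | h)
  exacts [notMem_D1 hsub hμ hW hx h, notMem_D2 hsub hF hx h,
    notMem_D3 hsub hμ hμt hF hW hx h]

theorem notMem_Eall (hsub : M.SubstAll) (hμ : M.Stable μ) (hμt : M.Stable μt)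
    (hF : M.geF μ μt) (hW : M.geW μt μ) {w : W} {x : F} (hx : x ∈ μ.wm w ∪ μt.wm w) :
    x ∉ M.Eall μ μt w := by
  rw [Eall_eq_swap]
  exact notMem_Dall (μ := μt.swap) (μt := μ.swap) hsub.swap hμt.swap hμ.swap hW hF
    (by rwa [union_comm])

theorem Cfred_eq_Cf_filter (f : F) (S : Finset W) :
    M.Cfred μ μt f S = M.Cf f (S.filter (· ∉ M.Dall μ μt f)) :=
  bestIn_restrict {T | M.uF f ∅ < M.uF f T} (M.injF f) _ S

theorem Cwred_eq_Cw_filter (w : W) (S : Finset F) :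
    M.Cwred μ μt w S = M.Cw w (S.filter (· ∉ M.Eall μ μt w)) :=
  bestIn_restrict {T | M.uW w ∅ < M.uW w T} (M.injW w) _ S

theorem substitutable_Cfred {f : F} (hs : Substitutable (M.Cf f)) :
    Substitutable (M.Cfred μ μt f) := by
  rw [funext (Cfred_eq_Cf_filter f)]
  exact hs.comp_filter (bestIn_subset _ _) _

theorem substitutable_Cwred {w : W} (hs : Substitutable (M.Cw w)) :
    Substitutable (M.Cwred μ μt w) := by
  rw [funext (Cwred_eq_Cw_filter w)]
  exact hs.comp_filter (bestIn_subset _ _) _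

theorem lad_Cfred {f : F} (hl : LAD (M.Cf f)) : LAD (M.Cfred μ μt f) := by
  rw [funext (Cfred_eq_Cf_filter f)]
  exact hl.comp_filter _

theorem lad_Cwred {w : W} (hl : LAD (M.Cw w)) : LAD (M.Cwred μ μt w) := by
  rw [funext (Cwred_eq_Cw_filter w)]
  exact hl.comp_filter _

/-- A worker chosen outside `μ(f)` would have been deleted in Step 1(a). -/
theorem Cfred_eq_fm_of_subset (hsub : M.SubstAll) (hμ : M.Stable μ) (hμt : M.Stable μt)
    (hF : M.geF μ μt) {f : F} {S : Finset W} (hS : μ.fm f ⊆ S) :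
    M.Cfred μ μt f S = μ.fm f := by
  set S' := S.filter (· ∉ M.Dall μ μt f)
  have hμS' : μ.fm f ⊆ S' := fun x hx => mem_filter.2
    ⟨hS hx, notMem_Dall hsub hμ hμt hF (geW_of_geF hsub hμt hF) (mem_union_left _ hx)⟩
  rw [Cfred_eq_Cf_filter]
  set X := M.Cf f S'
  have hXS' : X ⊆ S' := bestIn_subset _ _ _
  have hX : M.Cf f (X ∪ μ.fm f) = X :=
    bestIn_eq_of_subset_of_subset _ (M.injF f) rfl subset_union_left (union_subset hXS' hμS')
  have hXμ : X ⊆ μ.fm f := by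
    intro x hxX
    by_contra hxμ
    exact (mem_filter.1 (hXS' hxX)).2
      (Or.inl (Or.inl ⟨X, ⟨hX, fun h => hxμ (h ▸ hxX)⟩, hxX, hxμ⟩))
  exact (bestIn_eq_of_subset_of_subset _ (M.injF f) rfl hXμ hμS').symm.trans (hμ.1.1 f)

theorem Cwred_wm_eq (hsub : M.SubstAll) (hμ : M.Stable μ) (hμt : M.Stable μt)
    (hF : M.geF μ μt) (w : W) : M.Cwred μ μt w (μ.wm w) = μ.wm w := by
  rw [Cwred_eq_Cw_filter, filter_true_of_mem fun x hx =>
    notMem_Eall hsub hμ hμt hF (geW_of_geF hsub hμt hF) (mem_union_left _ hx)]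
  exact hμ.1.2 w

/-- Rural hospitals: by LAD firms weakly lose partners from `μ` to `μ̃` and workers weakly gain,
while both sides count the same pairs. -/
theorem card_fm_eq_of_geF [Fintype W] (hsub : M.SubstAll) (hlad : M.LADAll) (hμ : M.Stable μ)
    (hμt : M.Stable μt) (hF : M.geF μ μt) (g : F) : (μt.fm g).card = (μ.fm g).card := by
  have hW := geW_of_geF hsub hμt hF
  have hfirm : ∀ g', (μt.fm g').card ≤ (μ.fm g').card := fun g' =>
    (hlad.1 g').card_le_of_union_eq (hμt.1.1 g') (hF g')
  have hworker : ∀ v, (μ.wm v).card ≤ (μt.wm v).card := fun v =>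
    (hlad.2 v).card_le_of_union_eq (hμ.1.2 v) (hW v)
  set s := insert g (univ.biUnion fun v => μ.wm v ∪ μt.wm v)
  have hs : ∀ v, μ.wm v ∪ μt.wm v ⊆ s := fun v =>
    (subset_biUnion_of_mem (fun v => μ.wm v ∪ μt.wm v) (mem_univ v)).trans (subset_insert _ _)
  have hsum : ∑ g' ∈ s, (μt.fm g').card = ∑ g' ∈ s, (μ.fm g').card := by
    refine (sum_le_sum fun g' _ => hfirm g').antisymm ?_
    rw [μ.sum_card_fm_eq_sum_card_wm fun v => subset_union_left.trans (hs v),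
      μt.sum_card_fm_eq_sum_card_wm fun v => subset_union_right.trans (hs v)]
    exact sum_le_sum fun v _ => hworker v
  exact (sum_eq_sum_iff_of_le fun g' _ => hfirm g').1 hsum g (mem_insert_self _ _)

theorem card_fm_le_card_Cfred [Fintype W] (hsub : M.SubstAll) (hlad : M.LADAll)
    (hμ : M.Stable μ) (hμt : M.Stable μt) (hF : M.geF μ μt) {g : F} {S : Finset W}
    (hS : μt.fm g ⊆ S) : (μ.fm g).card ≤ (M.Cfred μ μt g S).card := by
  have hS' : μt.fm g ⊆ S.filter (· ∉ M.Dall μ μt g) := fun x hx => mem_filter.2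
    ⟨hS hx, notMem_Dall hsub hμ hμt hF (geW_of_geF hsub hμt hF) (mem_union_right _ hx)⟩
  calc (μ.fm g).card = (M.Cf g (μt.fm g)).card := by
        rw [hμt.1.1 g, card_fm_eq_of_geF hsub hlad hμ hμt hF]
    _ ≤ (M.Cfred μ μt g S).card := by
        rw [Cfred_eq_Cf_filter]; exact hlad.1 g _ _ hS'

theorem stablered_of_menus (ν : Matching F W) (S : F → Finset W) (T : W → Finset F)
    (hS : ∀ f, M.Cfred μ μt f (S f) = ν.fm f) (hT : ∀ w, M.Cwred μ μt w (T w) = ν.wm w)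
    (hST : ∀ f w, w ∈ S f ∨ f ∈ T w) : M.Stablered μ μt ν := by
  have hνS : ∀ f, ν.fm f ⊆ S f := fun f => hS f ▸ bestIn_subset _ _ _
  have hνT : ∀ w, ν.wm w ⊆ T w := fun w => hT w ▸ bestIn_subset _ _ _
  refine ⟨⟨fun f => bestIn_eq_of_subset_of_subset _ (M.injF f) (hS f) subset_rfl (hνS f),
    fun w => bestIn_eq_of_subset_of_subset _ (M.injW w) (hT w) subset_rfl (hνT w)⟩, ?_⟩
  rintro f w ⟨hwν, hwf, hfw⟩
  rcases hST f w with hw | hf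
  · have : M.Cfred μ μt f (insert w (ν.fm f)) = ν.fm f :=
      bestIn_eq_of_subset_of_subset _ (M.injF f) (hS f) (subset_insert _ _)
        (insert_subset hw (hνS f))
    exact hwν (this ▸ hwf)
  · have : M.Cwred μ μt w (insert f (ν.wm w)) = ν.wm w :=
      bestIn_eq_of_subset_of_subset _ (M.injW w) (hT w) (subset_insert _ _)
        (insert_subset hf (hνT w))
    exact hwν ((ν.consistent f w).2 (this ▸ hfw))

section Cycle

variable (r : ℕ) (w : ℕ → W) (f : ℕ → F)

/- In `μ_σ` the worker `w (i + 1)` leaves the firm `f (i + 1)` and joins `f i`; the worker-side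
sets are indexed by `i + 1` to match condition (iii) of `IsCycle`. -/

def departW (g : F) : Finset W := ((range r).filter fun i => f i = g).image w

def arriveW (g : F) : Finset W := ((range r).filter fun i => f i = g).image fun i => w (i + 1)

def departF (v : W) : Finset F :=
  ((range r).filter fun i => w (i + 1) = v).image fun i => f (i + 1)

def arriveF (v : W) : Finset F := ((range r).filter fun i => w (i + 1) = v).image f

theorem cyclicFm_eq (g : F) :
    cyclicFm μ r w f g = (μ.fm g \ departW r w f g) ∪ arriveW r w f g := by
  unfold cyclicFm
  split_ifs with h
  · rfl
  · have : (range r).filter (fun i => f i = g) = ∅ :=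
      filter_eq_empty_iff.2 fun i hi hfi => h ⟨i, hi, hfi⟩
    simp [departW, arriveW, this]

variable {r w f}

theorem mem_arriveW_iff {g : F} {v : W} : v ∈ arriveW r w f g ↔ g ∈ arriveF r w f v := by
  simp only [arriveW, arriveF, mem_image, mem_filter, mem_range, and_assoc, and_comm (a := f _ = g)]

theorem disjoint_fm_arriveW (hA : ∀ i, w (i + 1) ∉ μ.fm (f i)) (g : F) :
    Disjoint (μ.fm g) (arriveW r w f g) := by
  simp only [disjoint_right, arriveW, mem_image, mem_filter]
  rintro _ ⟨i, ⟨-, rfl⟩, rfl⟩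
  exact hA i

theorem disjoint_wm_arriveF (hA : ∀ i, w (i + 1) ∉ μ.fm (f i)) (v : W) :
    Disjoint (μ.wm v) (arriveF r w f v) := by
  simp only [disjoint_right, arriveF, mem_image, mem_filter]
  rintro _ ⟨i, ⟨-, rfl⟩, rfl⟩
  exact fun h => hA i ((μ.consistent _ _).2 h)

variable [Fintype W]

theorem IsCycle.mem_departW_iff (hc : M.IsCycle μ μt r w f) {g : F} {v : W} :
    v ∈ departW r w f g ↔ g ∈ departF r w f v := by
  have hP : Function.Periodic (fun i => w i = v ∧ f i = g) r := fun i => by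
    simp only [hc.2.1 i, hc.2.2.1 i]
  simp only [departW, departF, mem_image, mem_filter, mem_range, and_assoc, and_comm (a := f _ = g)]
  exact (hP.exists_lt_succ_iff hc.1).symm

/-- `(μ(f_i) \ {w_i}) ∪ {w_{i+1}}` has at least `|μ̃(f_i)| = |μ(f_i)|` elements, by LAD and the
rural hospitals theorem. -/
theorem IsCycle.succ_notMem_fm (hsub : M.SubstAll) (hlad : M.LADAll) (hμ : M.Stable μ)
    (hμt : M.Stable μt) (hF : M.geF μ μt) (hc : M.IsCycle μ μt r w f) (i : ℕ) :
    w (i + 1) ∉ μ.fm (f i) := by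
  intro hmem
  obtain ⟨⟨hwi, hwi'⟩, hchoice, -⟩ := hc.2.2.2 i
  have hne : w (i + 1) ≠ w i := by
    have := bestIn_subset _ _ _ (hchoice ▸ mem_insert_self _ _ :
      w (i + 1) ∈ M.Cfred μ μt (f i) (univ \ {w i}))
    simpa using this
  have hcard := card_fm_le_card_Cfred hsub hlad hμ hμt hF (S := univ \ {w i})
    fun x hx => by simpa using fun h : x = w i => hwi' (h ▸ hx)
  rw [hchoice, insert_eq_of_mem (mem_sdiff.2 ⟨hmem, by simpa using hne⟩),
    card_sdiff_of_subset (singleton_subset_iff.2 hwi), card_singleton] at hcard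
  have := card_pos.2 ⟨_, hwi⟩
  omega

theorem IsCycle.w_succ_eq (hc : M.IsCycle μ μt r w f) (hA : ∀ i, w (i + 1) ∉ μ.fm (f i))
    {i j : ℕ} (hw : w i = w j) (hf : f i = f j) : w (i + 1) = w (j + 1) := by
  have h := (hc.2.2.2 i).2.1
  rw [hw, hf, (hc.2.2.2 j).2.1] at h
  have : w (i + 1) ∈ insert (w (j + 1)) (μ.fm (f j) \ {w j}) := by
    rw [h]; exact mem_insert_self _ _
  rcases mem_insert.1 this with h' | h'
  · exact h'
  · exact absurd (hf ▸ (mem_sdiff.1 h').1) (hA i)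

theorem IsCycle.f_succ_eq (hc : M.IsCycle μ μt r w f) (hA : ∀ i, w (i + 1) ∉ μ.fm (f i))
    {i j : ℕ} (hf : f i = f j) (hw : w (i + 1) = w (j + 1)) : f (i + 1) = f (j + 1) := by
  have h := (hc.2.2.2 i).2.2
  rw [hf, hw, (hc.2.2.2 j).2.2] at h
  have hfj : ∀ g, f j ∉ μ.wm (w (j + 1)) \ {g} := fun g h' =>
    hA j ((μ.consistent _ _).2 (mem_sdiff.1 h').1)
  have hdiff := congrArg (·.erase (f j)) h
  simp only [erase_insert (hfj _)] at hdiff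
  by_contra hne
  have : f (i + 1) ∈ μ.wm (w (j + 1)) \ {f (j + 1)} :=
    mem_sdiff.2 ⟨hw ▸ (μ.consistent _ _).1 (hc.2.2.2 (i + 1)).1.1, by simpa using hne⟩
  rw [hdiff] at this
  exact (mem_sdiff.1 this).2 (mem_singleton_self _)

theorem IsCycle.eq_of_succ_eq (hc : M.IsCycle μ μt r w f) (hA : ∀ i, w (i + 1) ∉ μ.fm (f i))
    {i j : ℕ} (hw : w (i + 1) = w (j + 1)) (hf : f (i + 1) = f (j + 1)) :
    w i = w j ∧ f i = f j := by
  have hper : Function.Periodic (fun k => (w k, f k)) r := fun k => by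
    simp only [hc.2.1 k, hc.2.2.1 k]
  have := hper.eq_of_succ_eq hc.1 (fun k l hkl => by
    obtain ⟨hw, hf⟩ := Prod.mk.inj hkl
    have hw' := hc.w_succ_eq hA hw hf
    exact Prod.ext hw' (hc.f_succ_eq hA hf hw')) (Prod.ext hw hf)
  exact Prod.mk.inj this

theorem IsCycle.card_departW (hc : M.IsCycle μ μt r w f) (hA : ∀ i, w (i + 1) ∉ μ.fm (f i))
    (g : F) : (departW r w f g).card = (arriveW r w f g).card := by
  refine card_image_eq_card_image_of_eq_iff fun i hi j hj => ?_
  have hf : f i = f j := (mem_filter.1 hi).2.trans (mem_filter.1 hj).2.symm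
  exact ⟨fun hw => hc.w_succ_eq hA hw hf,
    fun hw => (hc.eq_of_succ_eq hA hw (hc.f_succ_eq hA hf hw)).1⟩

theorem IsCycle.card_departF (hc : M.IsCycle μ μt r w f) (hA : ∀ i, w (i + 1) ∉ μ.fm (f i))
    (v : W) : (departF r w f v).card = (arriveF r w f v).card := by
  refine card_image_eq_card_image_of_eq_iff fun i hi j hj => ?_
  have hw : w (i + 1) = w (j + 1) := (mem_filter.1 hi).2.trans (mem_filter.1 hj).2.symm
  exact ⟨fun hf => (hc.eq_of_succ_eq hA hw hf).2, fun hf => hc.f_succ_eq hA hf hw⟩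

theorem IsCycle.departW_subset (hc : M.IsCycle μ μt r w f) (g : F) :
    departW r w f g ⊆ μ.fm g := by
  simp only [departW, image_subset_iff, mem_filter]
  rintro i ⟨-, rfl⟩
  exact (hc.2.2.2 i).1.1

theorem IsCycle.departF_subset (hc : M.IsCycle μ μt r w f) (v : W) :
    departF r w f v ⊆ μ.wm v := by
  simp only [departF, image_subset_iff, mem_filter]
  rintro i ⟨-, rfl⟩
  exact (μ.consistent _ _).1 (hc.2.2.2 (i + 1)).1.1

theorem IsCycle.wm_eq_sdiff_union (hc : M.IsCycle μ μt r w f) {ν : Matching F W}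
    (hν : ∀ g, ν.fm g = cyclicFm μ r w f g) (v : W) :
    ν.wm v = (μ.wm v \ departF r w f v) ∪ arriveF r w f v := by
  ext g
  rw [← ν.consistent, hν, cyclicFm_eq]
  simp only [mem_union, mem_sdiff, μ.consistent, hc.mem_departW_iff, mem_arriveW_iff]

theorem IsCycle.Cfred_compl_departW (hsub : M.SubstAll) (hlad : M.LADAll) (hμ : M.Stable μ)
    (hμt : M.Stable μt) (hF : M.geF μ μt) (hc : M.IsCycle μ μt r w f)
    (hA : ∀ i, w (i + 1) ∉ μ.fm (f i)) (g : F) :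
    M.Cfred μ μt g (univ \ departW r w f g) = (μ.fm g \ departW r w f g) ∪ arriveW r w f g := by
  have hs := substitutable_Cfred (μ := μ) (μt := μt) (hsub.1 g)
  have hμg := Cfred_eq_fm_of_subset hsub hμ hμt hF (subset_univ (μ.fm g))
  refine (eq_of_subset_of_card_le (union_subset (fun x hx => ?_) (fun x hx => ?_)) ?_).symm
  · obtain ⟨hxμ, hxd⟩ := mem_sdiff.1 hx
    exact hs.mem_of_subset (hμg ▸ hxμ) sdiff_subset (mem_sdiff.2 ⟨mem_univ x, hxd⟩)
  · have hxd : x ∉ departW r w f g := fun h =>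
      (disjoint_left.1 (disjoint_fm_arriveW hA g)) (hc.departW_subset g h) hx
    simp only [arriveW, mem_image, mem_filter, mem_range] at hx
    obtain ⟨i, ⟨hi, rfl⟩, rfl⟩ := hx
    have hwi : w i ∈ departW r w f (f i) := mem_image_of_mem _ (mem_filter.2 ⟨mem_range.2 hi, rfl⟩)
    have hchoice := (hc.2.2.2 i).2.1
    refine hs.mem_of_subset (hchoice ▸ mem_insert_self _ _) ?_ (mem_sdiff.2 ⟨mem_univ _, hxd⟩)
    exact sdiff_subset_sdiff subset_rfl (singleton_subset_iff.2 hwi)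
  · calc (M.Cfred μ μt g (univ \ departW r w f g)).card
        ≤ (M.Cfred μ μt g univ).card := lad_Cfred (hlad.1 g) _ _ sdiff_subset
      _ = ((μ.fm g \ departW r w f g) ∪ arriveW r w f g).card := by
        rw [hμg, card_sdiff_union (hc.departW_subset g) (disjoint_fm_arriveW hA g)
          (hc.card_departW hA g)]

theorem IsCycle.Cwred_union_arriveF (hsub : M.SubstAll) (hlad : M.LADAll) (hμ : M.Stable μ)
    (hμt : M.Stable μt) (hF : M.geF μ μt) (hc : M.IsCycle μ μt r w f)
    (hA : ∀ i, w (i + 1) ∉ μ.fm (f i)) (v : W) :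
    M.Cwred μ μt v (μ.wm v ∪ arriveF r w f v) = (μ.wm v \ departF r w f v) ∪ arriveF r w f v := by
  have hs := substitutable_Cwred (μ := μ) (μt := μt) (hsub.2 v)
  refine eq_of_subset_of_card_le (fun x hx => ?_) ?_
  · rcases mem_union.1 (bestIn_subset _ _ _ hx) with hxμ | hxa
    · refine mem_union_left _ (mem_sdiff.2 ⟨hxμ, fun hxd => ?_⟩)
      simp only [departF, mem_image, mem_filter, mem_range] at hxd
      obtain ⟨i, ⟨hi, rfl⟩, rfl⟩ := hxd
      have hfi : f i ∈ arriveF r w f (w (i + 1)) :=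
        mem_image_of_mem _ (mem_filter.2 ⟨mem_range.2 hi, rfl⟩)
      have hx' := hs.mem_of_subset hx (union_subset_union subset_rfl (singleton_subset_iff.2 hfi))
        (mem_union_left _ hxμ)
      rw [(hc.2.2.2 i).2.2] at hx'
      rcases mem_insert.1 hx' with h | h
      · exact hA i ((μ.consistent _ _).2 (h ▸ hxμ))
      · exact (mem_sdiff.1 h).2 (mem_singleton_self _)
    · exact mem_union_right _ hxa
  · calc ((μ.wm v \ departF r w f v) ∪ arriveF r w f v).card
        = (M.Cwred μ μt v (μ.wm v)).card := by
          rw [Cwred_wm_eq hsub hμ hμt hF, card_sdiff_union (hc.departF_subset v)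
            (disjoint_wm_arriveF hA v) (hc.card_departF hA v)]
      _ ≤ _ := lad_Cwred (hlad.2 v) _ _ subset_union_left

end Cycle

end Market

/-- Proposition 2. With substitutable preferences satisfying the law of
aggregate demand, stable matchings `μ ≻_F μ̃`, and `μ'` a cyclic matching under the
reduced profile `P^{μ,μ̃}`, the matching `μ'` is stable under `P^{μ,μ̃}`. -/
theorem cyclic_matching_stable {F W : Type*} [DecidableEq F] [DecidableEq W] [Fintype W]
    (M : Market F W) (hsub : M.SubstAll) (hlad : M.LADAll)
    (μ μt : Matching F W) (hμ : M.Stable μ) (hμt : M.Stable μt) (hgt : M.gtF μ μt)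
    (μ' : Matching F W) (hcm : M.IsCyclicMatching μ μt μ') :
    M.Stablered μ μt μ' := by
  obtain ⟨r, w, f, hc, hν⟩ := hcm
  have hA := hc.succ_notMem_fm hsub hlad hμ hμt hgt.1
  refine M.stablered_of_menus μ' (fun g => univ \ Market.departW r w f g)
    (fun v => μ.wm v ∪ Market.arriveF r w f v) (fun g => ?_) (fun v => ?_) (fun g v => ?_)
  · rw [hν, Market.cyclicFm_eq]
    exact hc.Cfred_compl_departW hsub hlad hμ hμt hgt.1 hA g
  · rw [hc.wm_eq_sdiff_union hν]
    exact hc.Cwred_union_arriveF hsub hlad hμ hμt hgt.1 hA v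
  · by_cases hv : v ∈ Market.departW r w f g
    · exact Or.inr (mem_union_left _ (hc.departF_subset v (hc.mem_departW_iff.1 hv)))
    · exact Or.inl (mem_sdiff.2 ⟨mem_univ v, hv⟩)
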